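/- arXiv:2405.05567 — 4 statements merged into one kernel-verified Lean document; each statement's English description precedes it below -/
import Mathlib

section
/- Let G be an m×n matrix over F_q that generates a linear code C whose dual code has minimum distance at least r+1. If X is uniform on F_q^n, K is uniform on F_q^m and independent of X, and X̃ = X + KG, then for every subset R of [n] of size r, the mutual information I(X_R; X̃) = 0, where X_R denotes the restriction of X to coordinates in R. -/
/-!
The map `(x, k) ↦ (x_R, x + k G)` is an additive homomorphism, and it is onto: a dependency
among the columns of `G` indexed by `R` would be a nonzero vector of `ker G` of weight at most
`r`, so these columns are independent, `k ↦ (k G)_R` is onto, and `x` absorbs the rest. Pushing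
the uniform distribution forward along a surjective homomorphism gives the uniform distribution,
which on a product is the product of the uniform marginals; hence `x_R` and `x + k G` are
independent.
-/

open ProbabilityTheory MeasureTheory Matrix

namespace PMF

variable {Ω α β : Type*} [Fintype α] [Nonempty α]

theorem eq_uniformOfFintype_of_apply_eq (p : PMF α) (h : ∀ a b, p a = p b) :
    p = uniformOfFintype α := by
  ext a
  rw [uniformOfFintype_apply]
  refine ENNReal.eq_inv_of_mul_eq_one_left ?_
  calc p a * Fintype.card α = ∑ b, p b := by simp [h _ a, mul_comm]
    _ = 1 := by rw [← tsum_fintype (L := .unconditional _), p.tsum_coe]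

theorem map_uniformOfFintype_of_surjective [AddGroup Ω] [Fintype Ω] [AddGroup α]
    (φ : Ω →+ α) (hφ : Function.Surjective φ) :
    (uniformOfFintype Ω).map φ = uniformOfFintype α := by
  classical
  refine eq_uniformOfFintype_of_apply_eq _ fun a b => ?_
  simp only [map_apply, uniformOfFintype_apply, tsum_fintype, Finset.sum_ite,
    Finset.sum_const_zero, add_zero, Finset.sum_const, eq_comm (a := a), eq_comm (a := b)]
  rw [AddMonoidHom.card_fiber_eq_of_mem_range φ (hφ a) (hφ b)]

theorem toMeasure_uniformOfFintype_prod [Fintype β] [Nonempty β]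
    [MeasurableSpace α] [MeasurableSingletonClass α]
    [MeasurableSpace β] [MeasurableSingletonClass β] :
    (uniformOfFintype (α × β)).toMeasure =
      (uniformOfFintype α).toMeasure.prod (uniformOfFintype β).toMeasure := by
  refine Measure.ext_of_singleton fun ⟨a, b⟩ => ?_
  rw [← Set.singleton_prod_singleton, Measure.prod_prod, Set.singleton_prod_singleton]
  simp only [toMeasure_apply_singleton _ _ (MeasurableSet.singleton _), uniformOfFintype_apply,
    Fintype.card_prod, Nat.cast_mul]
  exact ENNReal.mul_inv (by simp) (by simp)

end PMF

theorem ProbabilityTheory.indepFun_uniformOfFintype_of_surjective_prod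
    {Ω α β : Type*} [AddGroup Ω] [Fintype Ω] [MeasurableSpace Ω] [DiscreteMeasurableSpace Ω]
    [AddGroup α] [Fintype α] [MeasurableSpace α] [MeasurableSingletonClass α]
    [AddGroup β] [Fintype β] [MeasurableSpace β] [MeasurableSingletonClass β]
    (f : Ω →+ α) (g : Ω →+ β) (hfg : Function.Surjective (f.prod g)) :
    IndepFun f g (PMF.uniformOfFintype Ω).toMeasure := by
  have hf : Function.Surjective f := fun a => (hfg (a, 0)).imp fun _ h => congrArg Prod.fst h
  have hg : Function.Surjective g := fun b => (hfg (0, b)).imp fun _ h => congrArg Prod.snd h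
  rw [indepFun_iff_map_prod_eq_prod_map_map (by fun_prop) (by fun_prop)]
  change Measure.map (f.prod g) _ = _
  simp only [PMF.toMeasure_map _ _ Measurable.of_discrete,
    PMF.map_uniformOfFintype_of_surjective _ hf, PMF.map_uniformOfFintype_of_surjective _ hg,
    PMF.map_uniformOfFintype_of_surjective _ hfg, PMF.toMeasure_uniformOfFintype_prod]

namespace Matrix

variable {K ι κ : Type*} [Field K] [Fintype ι]

theorem vecMul_surjective_of_mulVec_injective [Fintype κ] {M : Matrix κ ι K}
    (hM : Function.Injective M.mulVec) : Function.Surjective M.vecMul := by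
  have hrank : M.rank = Fintype.card ι := by
    rw [rank, LinearMap.finrank_range_of_inj hM, Module.finrank_fintype_fun_eq_card]
  rw [← coe_vecMulLinear, ← LinearMap.range_eq_top, ← mulVecLin_transpose]
  refine Submodule.eq_top_of_finrank_eq ?_
  rw [← rank, rank_transpose, hrank, Module.finrank_fintype_fun_eq_card]

theorem mulVec_submatrix_val_injective [DecidableEq K] {r : ℕ} (G : Matrix κ ι K)
    (hdual : ∀ v : ι → K, G *ᵥ v = 0 → v ≠ 0 → r + 1 ≤ hammingNorm v)
    (R : Finset ι) (hR : R.card ≤ r) :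
    Function.Injective (G.submatrix id ((↑) : R → ι)).mulVec := by
  classical
  rw [← coe_mulVecLin, ← LinearMap.ker_eq_bot, LinearMap.ker_eq_bot']
  intro v hv
  set w : ι → K := fun j => if h : j ∈ R then v ⟨j, h⟩ else 0
  have hGw : G *ᵥ w = 0 := by
    rw [← hv]
    ext i
    simp only [w, mulVec, dotProduct, mul_dite, mul_zero]
    rw [← Finset.sum_subset R.subset_univ fun j _ hj => dif_neg hj, ← Finset.sum_coe_sort R]
    exact Finset.sum_congr rfl fun j _ => dif_pos j.2
  have hw_weight : hammingNorm w ≤ R.card := by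
    refine Finset.card_le_card fun j hj => ?_
    by_contra hjR
    simp [w, hjR] at hj
  have hw : w = 0 := by
    by_contra hw_ne
    have := hdual w hGw hw_ne
    omega
  ext j
  simpa [w] using congrFun hw j

theorem surjective_restrict_vecMul [Fintype κ] [DecidableEq K] {r : ℕ} (G : Matrix κ ι K)
    (hdual : ∀ v : ι → K, G *ᵥ v = 0 → v ≠ 0 → r + 1 ≤ hammingNorm v)
    (R : Finset ι) (hR : R.card ≤ r) :
    Function.Surjective fun k : κ → K => fun i : R => (k ᵥ* G) i :=
  vecMul_surjective_of_mulVec_injective (mulVec_submatrix_val_injective G hdual R hR)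

end Matrix

theorem Matrix.surjective_restrict_prod_add_vecMul {A ι κ : Type*} [Ring A] [Fintype κ]
    (G : Matrix κ ι A) (R : Set ι)
    (hG : Function.Surjective fun k : κ → A => fun i : R => (k ᵥ* G) i) :
    Function.Surjective fun ω : (ι → A) × (κ → A) => (fun i : R => ω.1 i, ω.1 + ω.2 ᵥ* G) := by
  rintro ⟨a, y⟩
  obtain ⟨k, hk⟩ := hG fun i => y i - a i
  refine ⟨(y - k ᵥ* G, k), Prod.ext (funext fun i => ?_) (sub_add_cancel y _)⟩
  simp [congrFun hk i]

/-- Perfect `r`-subset privacy of the encoding `X̃ = X + K·G`: if the dual of the code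
generated by `G` has minimum distance at least `r+1` (every nonzero vector in the kernel
of `G` has Hamming weight at least `r+1`), `X` is uniform on `F^n`, `K` is uniform on
`F^m` and independent of `X`, then for every `r`-subset `R` of coordinates, `X_R` and
`X̃` are independent, i.e. `I(X_R; X̃) = 0`. -/
theorem subset_privacy {F : Type*} [Field F] [Fintype F] [DecidableEq F] {m n r : ℕ}
    (G : Matrix (Fin m) (Fin n) F)
    (hdual : ∀ v : Fin n → F, Matrix.mulVec G v = 0 → v ≠ 0 → r + 1 ≤ hammingNorm v)
    (R : Finset (Fin n)) (hR : R.card = r) :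
    letI : MeasurableSpace F := ⊤
    ProbabilityTheory.IndepFun
      (fun ω : (Fin n → F) × (Fin m → F) => fun i : ↥R => ω.1 (i : Fin n))
      (fun ω : (Fin n → F) × (Fin m → F) => ω.1 + Matrix.vecMul ω.2 G)
      (PMF.uniformOfFintype ((Fin n → F) × (Fin m → F))).toMeasure := by
  let _ : MeasurableSpace F := ⊤
  let restrict := LinearMap.funLeft F F ((↑) : R → Fin n) ∘ₗ LinearMap.fst F _ (Fin m → F)
  let encode := LinearMap.fst F _ _ + G.vecMulLinear ∘ₗ LinearMap.snd F (Fin n → F) _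
  exact indepFun_uniformOfFintype_of_surjective_prod restrict.toAddMonoidHom
    encode.toAddMonoidHom
    (surjective_restrict_prod_add_vecMul G R (surjective_restrict_vecMul G hdual R hR.le))
end

section
/- Let m be odd. With G the row-reduced generator matrix of binary RM(1,m) as above, the (m+1)×(m+3) matrix formed by the identity columns I_{m+1}, the column indexed by [m] (which has ones in the first m rows and zero in the last row), and the column indexed by any 2-element subset B of [m] (which has Hamming weight three with a one in the last row), retains rank m+1 after removal of any one column. Hence the minimum 1-information super-set size for RM(1,m) is at most m+3 when m is odd. -/
/-- `I` is an information set for the code generated by the rows of `G`: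
`I` has as many coordinates as `G` has rows, and the columns of `G` indexed by `I`
are linearly independent (equivalently, the square submatrix `G_I` is invertible). -/
def IsInformationSet {F : Type*} [Field F] {ρ ι : Type*} [Fintype ρ]
    (G : Matrix ρ ι F) (I : Finset ι) : Prop :=
  I.card = Fintype.card ρ ∧
    LinearIndependent F (fun j : ↥I => fun i : ρ => G i (j : ι))

/-- `T` is an `S`-information super-set for the code generated by the rows of `G`:
every sub-multiset of `T` of size `|T| - S` contains an information set. -/
def IsInfoSuperSet {F : Type*} [Field F] {ρ ι : Type*} [Fintype ρ]
    (G : Matrix ρ ι F) (S : ℕ) (T : Multiset ι) : Prop :=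
  ∀ W ≤ T, Multiset.card W = Multiset.card T - S →
    ∃ I : Finset ι, I.val ≤ W ∧ IsInformationSet G I

/-- The minimum size of an `S`-information super-set for the code generated by `G`. -/
noncomputable def minSuperSize {F : Type*} [Field F] {ρ ι : Type*} [Fintype ρ]
    (G : Matrix ρ ι F) (S : ℕ) : ℕ :=
  sInf {c | ∃ T : Multiset ι, IsInfoSuperSet G S T ∧ Multiset.card T = c}
/-- The row-reduced generator matrix of the binary first-order Reed–Muller code `RM(1,m)`:
the matrix `M` of all binary columns of length `m`, with an appended row equal to the
all-one vector plus the sum of the rows of `M`. Columns are indexed by vectors in `F_2^m`. -/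
def RM1mat (m : ℕ) : Matrix (Fin (m + 1)) (Fin m → ZMod 2) (ZMod 2) :=
  fun i v => if h : (i : ℕ) < m then v ⟨i, h⟩ else 1 + ∑ j, v j

/-- The multiset of `m+1` columns of `RM1mat m` forming the identity matrix `I_{m+1}`:
the zero column and the standard basis columns. -/
def idCols (m : ℕ) : Multiset (Fin m → ZMod 2) :=
  (0 : Fin m → ZMod 2) ::ₘ
    Multiset.map (fun j : Fin m => fun i => if i = j then 1 else 0) Finset.univ.val

/-! The columns of `RM1mat m` indexed by `0` and by the unit vectors `e_j` are the standard
basis of `F₂^(m+1)`, and replacing a basis vector `e_k` by any vector with a nonzero `k`-th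
coordinate yields a basis again. If the all-one input or `{a, b}` is deleted, the identity
columns remain. If `0` is deleted, its column `e_last` is replaced by the column of `{a, b}`,
whose last entry is `1 + 2 = 1`. If `e_j` is deleted, it is replaced by the column of the
all-one input, whose `j`-th entry is `1`. -/

theorem Module.Basis.linearIndependent_update {K V ι : Type*} [Field K] [AddCommGroup V]
    [Module K V] [DecidableEq ι] (b : Module.Basis ι K V) (k : ι) (x : V) (hx : b.repr x k ≠ 0) :
    LinearIndependent K (Function.update b k x) :=
  b.linearIndependent.update k x
    ⟨1, one_mem _, b.repr x, mem_nonZeroDivisors_of_ne_zero hx, by simp⟩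

theorem isInformationSet_image {F ρ ι : Type*} [Field F] [Fintype ρ] [DecidableEq ι]
    {G : Matrix ρ ι F} {f : ρ → ι} (hf : LinearIndependent F fun r i => G i (f r)) :
    IsInformationSet G (Finset.univ.image f) := by
  have hinj : Function.Injective f := hf.injective.of_comp (f := fun j i => G i j)
  refine ⟨by rw [Finset.card_image_of_injective _ hinj, Finset.card_univ], ?_⟩
  have := (linearIndepOn_univ_iff.2 hf).image_of_comp f fun j i => G i j
  rwa [← Finset.coe_univ, ← Finset.coe_image] at this

theorem isInfoSuperSet_one_of_forall_mem {F ρ ι : Type*} [Field F] [Fintype ρ] [DecidableEq ι]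
    {G : Matrix ρ ι F} {T : Multiset ι} (hT : T ≠ 0)
    (h : ∀ x ∈ T, ∃ I : Finset ι, IsInformationSet G I ∧ (∀ y ∈ I, y ∈ T) ∧ x ∉ I) :
    IsInfoSuperSet G 1 T := by
  intro W hWT hW
  have hT1 : 1 ≤ Multiset.card T := Multiset.card_pos.2 hT
  obtain ⟨x, hx⟩ : ∃ x, T - W = {x} :=
    Multiset.card_eq_one.1 (by rw [Multiset.card_sub hWT]; omega)
  have hWx : W = T.erase x := by rw [← Multiset.sub_singleton, ← hx, tsub_tsub_cancel_of_le hWT]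
  obtain ⟨I, hI, hIT, hxI⟩ := h x (Multiset.singleton_le.1 (hx ▸ tsub_le_self))
  refine ⟨I, ?_, hI⟩
  rw [hWx, ← Multiset.erase_of_notMem hxI]
  exact Multiset.erase_le_erase x ((Multiset.le_iff_subset I.nodup).2 hIT)

namespace RM1mat

variable {m : ℕ}

def unitIndex : Fin (m + 1) → (Fin m → ZMod 2) := Fin.lastCases 0 fun j => Pi.single j 1

@[simp] lemma unitIndex_last : unitIndex (Fin.last m) = 0 := Fin.lastCases_last

@[simp] lemma unitIndex_castSucc (j : Fin m) : unitIndex j.castSucc = Pi.single j 1 :=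
  Fin.lastCases_castSucc j

@[simp] lemma apply_castSucc (j : Fin m) (v : Fin m → ZMod 2) :
    RM1mat m j.castSucc v = v j := by
  simp [RM1mat]

@[simp] lemma apply_last (v : Fin m → ZMod 2) : RM1mat m (Fin.last m) v = 1 + ∑ j, v j := by
  simp [RM1mat]

lemma col_unitIndex :
    (fun r i => RM1mat m i (unitIndex r)) = Pi.basisFun (ZMod 2) (Fin (m + 1)) := by
  ext r i
  induction r using Fin.lastCases <;> induction i using Fin.lastCases <;>
    simp [Pi.single_apply, CharTwo.add_self_eq_zero]

lemma idCols_eq_map_unitIndex : idCols m = Finset.univ.val.map unitIndex := by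
  rw [idCols, Fin.univ_castSuccEmb, Finset.cons_val, Multiset.map_cons, Finset.map_val,
    Multiset.map_map]
  congr 1
  · simp
  · refine Multiset.map_congr rfl fun j _ => ?_
    ext i
    simp [Pi.single_apply]

lemma unitIndex_mem_idCols (r : Fin (m + 1)) : unitIndex r ∈ idCols m :=
  idCols_eq_map_unitIndex ▸ Multiset.mem_map_of_mem _ (Finset.mem_univ_val r)

lemma apply_last_pair {a b : Fin m} (hab : a ≠ b) :
    RM1mat m (Fin.last m) (fun i => if i = a ∨ i = b then 1 else 0) = 1 := by
  rw [apply_last, Finset.sum_boole, Finset.filter_or, Finset.filter_eq', Finset.filter_eq',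
    if_pos (Finset.mem_univ a), if_pos (Finset.mem_univ b), ← Finset.insert_eq,
    Finset.card_pair hab]
  rfl

lemma unitIndex_injective : Function.Injective (unitIndex (m := m)) := by
  have h := (Pi.basisFun (ZMod 2) (Fin (m + 1))).injective
  rw [← col_unitIndex] at h
  exact h.of_comp (f := fun v i => RM1mat m i v)

lemma notMem_range_unitIndex {a b : Fin m} (hab : a ≠ b) {z : Fin m → ZMod 2}
    (ha : z a ≠ 0) (hb : z b ≠ 0) : z ∉ Set.range unitIndex := by
  rintro ⟨r, rfl⟩
  induction r using Fin.lastCases with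
  | last => simp at ha
  | cast j =>
    obtain rfl | hja := eq_or_ne j a
    · simp [hab.symm] at hb
    · simp [hja.symm] at ha

lemma exists_isInformationSet_notMem {T : Multiset (Fin m → ZMod 2)}
    (hT : ∀ r, unitIndex r ∈ T) {x v : Fin m → ZMod 2} (k : Fin (m + 1)) (hvT : v ∈ T)
    (hv : RM1mat m k v ≠ 0) (hxv : x ≠ v) (hx : ∀ r ≠ k, unitIndex r ≠ x) :
    ∃ I : Finset (Fin m → ZMod 2), IsInformationSet (RM1mat m) I ∧ (∀ y ∈ I, y ∈ T) ∧ x ∉ I := by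
  refine ⟨Finset.univ.image (Function.update unitIndex k v), isInformationSet_image ?_, ?_, ?_⟩
  · have hcol : (fun r i => RM1mat m i (Function.update unitIndex k v r)) =
        Function.update (Pi.basisFun (ZMod 2) (Fin (m + 1))) k fun i => RM1mat m i v := by
      rw [← col_unitIndex]
      exact Function.comp_update (fun v i => RM1mat m i v) unitIndex k v
    rw [hcol]
    exact (Pi.basisFun (ZMod 2) (Fin (m + 1))).linearIndependent_update k _
      (by rwa [Pi.basisFun_repr])
  · simp only [Finset.mem_image, Finset.mem_univ, true_and, forall_exists_index]
    rintro _ r rfl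
    by_cases hr : r = k
    · simpa [hr] using hvT
    · simpa [hr] using hT r
  · simp only [Finset.mem_image, Finset.mem_univ, true_and, not_exists]
    intro r
    by_cases hr : r = k
    · simpa [hr] using hxv.symm
    · simpa [hr] using hx r hr

end RM1mat

open RM1mat in
theorem rm1_odd_superset_general (m : ℕ) (a b : Fin m) (hab : a ≠ b) :
    IsInfoSuperSet (RM1mat m) 1
      ((fun _ => (1 : ZMod 2)) ::ₘ
        (fun i => if i = a ∨ i = b then (1 : ZMod 2) else 0) ::ₘ idCols m) ∧
      minSuperSize (RM1mat m) 1 ≤ m + 3 := by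
  set u : Fin m → ZMod 2 := fun _ => 1
  set w : Fin m → ZMod 2 := fun i => if i = a ∨ i = b then 1 else 0
  set T := u ::ₘ w ::ₘ idCols m
  have hu : u ∉ Set.range unitIndex := notMem_range_unitIndex hab one_ne_zero one_ne_zero
  have hw : w ∉ Set.range unitIndex := notMem_range_unitIndex hab (by simp [w]) (by simp [w])
  have hT (r : Fin (m + 1)) : unitIndex r ∈ T :=
    Multiset.mem_cons_of_mem <| Multiset.mem_cons_of_mem <| unitIndex_mem_idCols r
  have hsuper : IsInfoSuperSet (RM1mat m) 1 T := by
    refine isInfoSuperSet_one_of_forall_mem Multiset.cons_ne_zero fun x hx => ?_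
    rw [Multiset.mem_cons, Multiset.mem_cons, idCols_eq_map_unitIndex, Multiset.mem_map] at hx
    rcases hx with rfl | rfl | ⟨r, -, rfl⟩
    · exact exists_isInformationSet_notMem hT (Fin.last m) (hT (Fin.last m)) (by simp)
        (fun h => hu ⟨_, h.symm⟩) fun r _ h => hu ⟨r, h⟩
    · exact exists_isInformationSet_notMem hT (Fin.last m) (hT (Fin.last m)) (by simp)
        (fun h => hw ⟨_, h.symm⟩) fun r _ h => hw ⟨r, h⟩
    · cases r using Fin.lastCases with
      | last =>
        exact exists_isInformationSet_notMem hT (Fin.last m) (by simp [T])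
          (by simp [w, apply_last_pair hab]) (fun h => hw ⟨_, h⟩)
          fun r hr h => hr (unitIndex_injective h)
      | cast j =>
        exact exists_isInformationSet_notMem hT j.castSucc (by simp [T]) (by simp [u])
          (fun h => hu ⟨_, h⟩) fun r hr h => hr (unitIndex_injective h)
  exact ⟨hsuper, Nat.sInf_le ⟨T, hsuper, by simp [T, idCols_eq_map_unitIndex]⟩⟩

/-- For odd `m`, the `m+3` columns of the generator matrix of binary `RM(1,m)` given by
the identity columns `I_{m+1}`, the column indexed by `[m]` (the all-one input), and the
column indexed by a 2-element subset `B = {a,b}` of `[m]`, retain rank `m+1` after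
removal of any one column; i.e., they form a `1`-information super-set. Hence the minimum
`1`-information super-set size for `RM(1,m)` is at most `m+3` when `m` is odd. -/
theorem rm1_odd_superset (m : ℕ) (hm : Odd m) (a b : Fin m) (hab : a ≠ b) :
    IsInfoSuperSet (RM1mat m) 1
      ((fun _ => (1 : ZMod 2)) ::ₘ
        (fun i => if i = a ∨ i = b then (1 : ZMod 2) else 0) ::ₘ idCols m) ∧
      minSuperSize (RM1mat m) 1 ≤ m + 3 :=
  rm1_odd_superset_general m a b hab
end

section
/- Let RM(d,m) denote the binary Reed-Muller code, and let L(d,m,S) denote the minimum size of an S-information super-set for RM(d,m). Then L(d,m,S) ≤ L(d,m−1,S) + L(d−1,m−1,S). -/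
/-- A generator matrix of the `q`-ary Reed–Muller code `RM_q(d,m)`: rows are indexed by
exponent vectors with entries at most `q-1` and total degree at most `d`, columns by the
points of `F^m`; the entry is the evaluation of the corresponding monomial. -/
def RMgen (F : Type*) [CommRing F] (q d m : ℕ) :
    Matrix {e : Fin m → Fin q // ∑ i, (e i : ℕ) ≤ d} (Fin m → F) F :=
  fun e z => ∏ i, z i ^ ((e.1 i : ℕ))

theorem LinearIndependent.sumElim_of_map_eq_zero {R M N ι₁ ι₂ : Type*} [Ring R]
    [AddCommGroup M] [Module R M] [AddCommGroup N] [Module R N] {f : ι₁ → M} {g : ι₂ → M}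
    (l : M →ₗ[R] N) (hf : LinearIndependent R f) (hlf : ∀ i, l (f i) = 0)
    (hg : LinearIndependent R (l ∘ g)) : LinearIndependent R (Sum.elim f g) :=
  LinearIndependent.sumElim_of_quotient (M' := LinearMap.ker l) (f := fun i => ⟨f i, hlf i⟩)
    (.of_comp (LinearMap.ker l).subtype hf) g
    (.of_comp ((LinearMap.ker l).liftQ l le_rfl) hg)

theorem Multiset.filterMap_const_none {α β : Type*} (s : Multiset α) :
    s.filterMap (fun _ => (none : Option β)) = 0 :=
  Multiset.induction_on s rfl fun _ _ ih => by rw [Multiset.filterMap_cons_none _ _ rfl, ih]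

@[simp]
theorem Multiset.filterMap_getLeft?_disjSum {α β : Type*} (s : Multiset α) (t : Multiset β) :
    (s.disjSum t).filterMap Sum.getLeft? = s := by
  simp [Multiset.disjSum, Multiset.filterMap_add, Multiset.filterMap_map, Function.comp_def,
    Multiset.filterMap_const_none]

@[simp]
theorem Multiset.filterMap_getRight?_disjSum {α β : Type*} (s : Multiset α) (t : Multiset β) :
    (s.disjSum t).filterMap Sum.getRight? = t := by
  simp [Multiset.disjSum, Multiset.filterMap_add, Multiset.filterMap_map, Function.comp_def,
    Multiset.filterMap_const_none]

theorem Multiset.disjSum_filterMap_getLeft?_getRight? {α β : Type*} (W : Multiset (α ⊕ β)) :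
    (W.filterMap Sum.getLeft?).disjSum (W.filterMap Sum.getRight?) = W := by
  induction W using Multiset.induction_on with
  | empty => rfl
  | cons x W ih =>
    conv_rhs => rw [← ih]
    rcases x with a | b
    · rw [Multiset.filterMap_cons_some Sum.getLeft? _ _ rfl,
        Multiset.filterMap_cons_none (f := Sum.getRight?) _ _ rfl]
      simp [Multiset.disjSum]
    · rw [Multiset.filterMap_cons_none (f := Sum.getLeft?) _ _ rfl,
        Multiset.filterMap_cons_some Sum.getRight? _ _ rfl]
      simp [Multiset.disjSum]

theorem Multiset.exists_disjSum_eq_of_le_disjSum {α β : Type*} {s : Multiset α}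
    {t : Multiset β} {W : Multiset (α ⊕ β)} (h : W ≤ s.disjSum t) :
    ∃ s' ≤ s, ∃ t' ≤ t, W = s'.disjSum t' :=
  ⟨_, by simpa using Multiset.filterMap_le_filterMap Sum.getLeft? h,
    _, by simpa using Multiset.filterMap_le_filterMap Sum.getRight? h,
    W.disjSum_filterMap_getLeft?_getRight?.symm⟩

theorem Multiset.exists_le_card_eq {α : Type*} {s : Multiset α} {n : ℕ} (h : n ≤ card s) :
    ∃ t ≤ s, card t = n := by
  obtain ⟨t, ht⟩ := Multiset.card_pos_iff_exists_mem.1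
    (by rw [card_powersetCard]; exact Nat.choose_pos h : 0 < card (powersetCard n s))
  exact ⟨t, mem_powersetCard.1 ht⟩

section InformationSet

variable {F : Type*} [Field F] {ρ ι : Type*} [Fintype ρ]

theorem IsInformationSet.submatrix {G : Matrix ρ ι F} {I : Finset ι} (hI : IsInformationSet G I)
    {ρ' ι' : Type*} [Fintype ρ'] (er : ρ' ≃ ρ) (ec : ι' ≃ ι) :
    IsInformationSet (G.submatrix er ec) (I.map ec.symm.toEmbedding) := by
  refine ⟨by rw [Finset.card_map, hI.1, Fintype.card_congr er], ?_⟩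
  have hcols := hI.2.comp
    (fun j : ↥(I.map ec.symm.toEmbedding) => (⟨ec j, by simpa using j.2⟩ : ↥I))
    fun a b h => Subtype.ext (ec.injective (congrArg Subtype.val h))
  exact hcols.map' _ (LinearEquiv.funCongrLeft F F er).ker

theorem isInformationSet_singleton [Unique ρ] {G : Matrix ρ ι F} {j : ι} (hj : G default j ≠ 0) :
    IsInformationSet G {j} :=
  ⟨by simp, by simpa [funext_iff] using ⟨default, hj⟩⟩

theorem IsInformationSet.fromBlocks {ρ₁ ρ₂ ι₁ ι₂ : Type*} [Fintype ρ₁] [Fintype ρ₂]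
    {A : Matrix ρ₁ ι₁ F} {D : Matrix ρ₂ ι₂ F} {I₁ : Finset ι₁} {I₂ : Finset ι₂}
    (hA : IsInformationSet A I₁) (hD : IsInformationSet D I₂) (B : Matrix ρ₁ ι₂ F) :
    IsInformationSet (Matrix.fromBlocks A B 0 D) (I₁.disjSum I₂) := by
  set G := Matrix.fromBlocks A B 0 D
  refine ⟨by simp [hA.1, hD.1], ?_⟩
  let f : ↥I₁ → ρ₁ ⊕ ρ₂ → F := fun j i => G i (.inl j)
  let g : ↥I₂ → ρ₁ ⊕ ρ₂ → F := fun j i => G i (.inr j)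
  have hf : LinearIndependent F f := .of_comp (LinearMap.funLeft F F Sum.inl) hA.2
  have hcols := LinearIndependent.sumElim_of_map_eq_zero (LinearMap.funLeft F F Sum.inr) hf
    (fun j => by ext; simp [f, G]) (g := g) hD.2
  let e : ↥(I₁.disjSum I₂) ≃ ↥I₁ ⊕ ↥I₂ := Equiv.subtypeSum.trans <| Equiv.sumCongr
    (Equiv.subtypeEquivRight fun _ => Finset.inl_mem_disjSum)
    (Equiv.subtypeEquivRight fun _ => Finset.inr_mem_disjSum)
  have hfamily : (fun j : ↥(I₁.disjSum I₂) => fun i => G i j) = Sum.elim f g ∘ e := by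
    funext ⟨x, hx⟩
    rcases x with a | b <;> rfl
  exact hfamily ▸ hcols.comp e e.injective

end InformationSet

section InfoSuperSet

variable {F : Type*} [Field F] {ρ ι : Type*} [Fintype ρ] {G : Matrix ρ ι F} {S : ℕ}
  {T : Multiset ι}

theorem IsInfoSuperSet.exists_isInformationSet_le (hT : IsInfoSuperSet G S T) {W : Multiset ι}
    (hW : W ≤ T) (hcard : Multiset.card T - S ≤ Multiset.card W) :
    ∃ I : Finset ι, I.val ≤ W ∧ IsInformationSet G I := by
  obtain ⟨V, hVW, hV⟩ := Multiset.exists_le_card_eq hcard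
  obtain ⟨I, hIV, hI⟩ := hT V (hVW.trans hW) hV
  exact ⟨I, hIV.trans hVW, hI⟩

theorem IsInfoSuperSet.submatrix (hT : IsInfoSuperSet G S T) {ρ' ι' : Type*} [Fintype ρ']
    (er : ρ' ≃ ρ) (ec : ι' ≃ ι) : IsInfoSuperSet (G.submatrix er ec) S (T.map ec.symm) := by
  intro W hW hcard
  have hWT : W.map ec ≤ T := by
    simpa [Multiset.map_map] using Multiset.map_le_map (f := ec) hW
  obtain ⟨I, hIW, hI⟩ := hT _ hWT (by simpa using hcard)
  refine ⟨I.map ec.symm.toEmbedding, ?_, hI.submatrix er ec⟩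
  simpa [Multiset.map_map] using Multiset.map_le_map (f := ec.symm) hIW

theorem isInfoSuperSet_replicate [Unique ρ] {j : ι} (hj : G default j ≠ 0) (S : ℕ) :
    IsInfoSuperSet G S (Multiset.replicate (S + 1) j) := by
  intro W hW hcard
  obtain ⟨k, -, rfl⟩ := Multiset.le_replicate_iff.1 hW
  obtain rfl : k = 1 := by simpa using hcard
  exact ⟨{j}, by simp, isInformationSet_singleton hj⟩

theorem IsInfoSuperSet.fromBlocks {ρ₁ ρ₂ ι₁ ι₂ : Type*} [Fintype ρ₁] [Fintype ρ₂]
    {A : Matrix ρ₁ ι₁ F} {D : Matrix ρ₂ ι₂ F} {T₁ : Multiset ι₁} {T₂ : Multiset ι₂}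
    (h₁ : IsInfoSuperSet A S T₁) (h₂ : IsInfoSuperSet D S T₂) (B : Matrix ρ₁ ι₂ F) :
    IsInfoSuperSet (Matrix.fromBlocks A B 0 D) S (T₁.disjSum T₂) := by
  intro W hW hcard
  obtain ⟨W₁, hW₁, W₂, hW₂, rfl⟩ := Multiset.exists_disjSum_eq_of_le_disjSum hW
  rw [Multiset.card_disjSum, Multiset.card_disjSum] at hcard
  have hc₁ := Multiset.card_le_card hW₁
  have hc₂ := Multiset.card_le_card hW₂
  obtain ⟨I₁, hIW₁, hI₁⟩ := h₁.exists_isInformationSet_le hW₁ (by omega)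
  obtain ⟨I₂, hIW₂, hI₂⟩ := h₂.exists_isInformationSet_le hW₂ (by omega)
  exact ⟨I₁.disjSum I₂, by simpa using Multiset.disjSum_mono hIW₁ hIW₂, hI₁.fromBlocks hI₂ B⟩

theorem IsInfoSuperSet.minSuperSize_le (hT : IsInfoSuperSet G S T) :
    minSuperSize G S ≤ Multiset.card T :=
  Nat.sInf_le ⟨T, hT, rfl⟩

theorem exists_isInfoSuperSet_card_eq_minSuperSize (h : ∃ T, IsInfoSuperSet G S T) :
    ∃ T, IsInfoSuperSet G S T ∧ Multiset.card T = minSuperSize G S :=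
  let ⟨T, hT⟩ := h
  Nat.sInf_mem (s := {c | ∃ T, IsInfoSuperSet G S T ∧ Multiset.card T = c}) ⟨_, T, hT, rfl⟩

end InfoSuperSet

def Fin.snocSumEquiv {α : Type*} (e : α ≃ Bool) (n : ℕ) :
    (Fin (n + 1) → α) ≃ (Fin n → α) ⊕ (Fin n → α) :=
  (Fin.snocEquiv fun _ => α).symm.trans
    ((e.prodCongr (Equiv.refl _)).trans (Equiv.boolProdEquivSum _))

@[simp]
theorem Fin.snocSumEquiv_symm_inl {α : Type*} (e : α ≃ Bool) {n : ℕ} (x : Fin n → α) :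
    (Fin.snocSumEquiv e n).symm (.inl x) = Fin.snoc x (e.symm false) := rfl

@[simp]
theorem Fin.snocSumEquiv_symm_inr {α : Type*} (e : α ≃ Bool) {n : ℕ} (x : Fin n → α) :
    (Fin.snocSumEquiv e n).symm (.inr x) = Fin.snoc x (e.symm true) := rfl

def ZMod.twoEquivBool : ZMod 2 ≃ Bool := (ZMod.finEquiv 2).symm.toEquiv.trans finTwoEquiv

@[simp]
theorem ZMod.twoEquivBool_symm_false : ZMod.twoEquivBool.symm false = 0 := rfl

@[simp]
theorem ZMod.twoEquivBool_symm_true : ZMod.twoEquivBool.symm true = 1 := rfl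

theorem Fin.sum_val_snoc {q n : ℕ} (e : Fin n → Fin q) (b : Fin q) :
    ∑ i, ((Fin.snoc e b : Fin (n + 1) → Fin q) i : ℕ) = ∑ i, (e i : ℕ) + b := by
  simp [Fin.sum_univ_castSucc]

theorem RMgen_snoc {F : Type*} [CommRing F] {q d d' n : ℕ} (e : Fin n → Fin q) (b : Fin q)
    (he : ∑ i, ((Fin.snoc e b : Fin (n + 1) → Fin q) i : ℕ) ≤ d) (he' : ∑ i, (e i : ℕ) ≤ d')
    (z : Fin n → F) (c : F) :
    RMgen F q d (n + 1) ⟨Fin.snoc e b, he⟩ (Fin.snoc z c) =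
      RMgen F q d' n ⟨e, he'⟩ z * c ^ (b : ℕ) := by
  simp [RMgen, Fin.prod_univ_castSucc]

def rmExponentEquiv (d n : ℕ) :
    {e : Fin (n + 1) → Fin 2 // ∑ i, (e i : ℕ) ≤ d + 1} ≃
      {e : Fin n → Fin 2 // ∑ i, (e i : ℕ) ≤ d + 1} ⊕ {e : Fin n → Fin 2 // ∑ i, (e i : ℕ) ≤ d} :=
  ((Fin.snocSumEquiv finTwoEquiv n).subtypeEquivOfSubtype'.trans Equiv.subtypeSum).trans
    (Equiv.sumCongr (Equiv.subtypeEquivRight fun e => by simp [Fin.sum_val_snoc, finTwoEquiv])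
      (Equiv.subtypeEquivRight fun e => by simp [Fin.sum_val_snoc, finTwoEquiv]))

@[simp]
theorem rmExponentEquiv_symm_inl (d n : ℕ) (e : {e : Fin n → Fin 2 // ∑ i, (e i : ℕ) ≤ d + 1}) :
    (rmExponentEquiv d n).symm (.inl e) =
      ⟨Fin.snoc e.1 0, by simpa [Fin.sum_val_snoc] using e.2⟩ := rfl

@[simp]
theorem rmExponentEquiv_symm_inr (d n : ℕ) (e : {e : Fin n → Fin 2 // ∑ i, (e i : ℕ) ≤ d}) :
    (rmExponentEquiv d n).symm (.inr e) =
      ⟨Fin.snoc e.1 1, by simpa [Fin.sum_val_snoc] using e.2⟩ := rfl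

open Matrix in
theorem RMgen_succ_apply_symm (d n : ℕ) (x y) :
    RMgen (ZMod 2) 2 (d + 1) (n + 1) ((rmExponentEquiv d n).symm x)
        ((Fin.snocSumEquiv ZMod.twoEquivBool n).symm y) =
      fromBlocks (RMgen (ZMod 2) 2 (d + 1) n) (RMgen (ZMod 2) 2 (d + 1) n) 0
        (RMgen (ZMod 2) 2 d n) x y := by
  rcases x with ⟨x, hx⟩ | ⟨x, hx⟩ <;> rcases y with y | y
  all_goals
    simp only [rmExponentEquiv_symm_inl, rmExponentEquiv_symm_inr, Fin.snocSumEquiv_symm_inl,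
      Fin.snocSumEquiv_symm_inr, RMgen_snoc (he' := hx)]
    simp

open Matrix in
theorem RMgen_succ_eq (d n : ℕ) :
    RMgen (ZMod 2) 2 (d + 1) (n + 1) =
      (fromBlocks (RMgen (ZMod 2) 2 (d + 1) n) (RMgen (ZMod 2) 2 (d + 1) n) 0
        (RMgen (ZMod 2) 2 d n)).submatrix (rmExponentEquiv d n)
        (Fin.snocSumEquiv ZMod.twoEquivBool n) :=
  Matrix.ext fun e z => by
    simpa using RMgen_succ_apply_symm d n (rmExponentEquiv d n e)
      (Fin.snocSumEquiv ZMod.twoEquivBool n z)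

theorem IsInfoSuperSet.RMgen_succ {d n S : ℕ} {T₁ T₂ : Multiset (Fin n → ZMod 2)}
    (h₁ : IsInfoSuperSet (RMgen (ZMod 2) 2 (d + 1) n) S T₁)
    (h₂ : IsInfoSuperSet (RMgen (ZMod 2) 2 d n) S T₂) :
    IsInfoSuperSet (RMgen (ZMod 2) 2 (d + 1) (n + 1)) S
      ((T₁.disjSum T₂).map (Fin.snocSumEquiv ZMod.twoEquivBool n).symm) := by
  rw [RMgen_succ_eq]
  exact (h₁.fromBlocks h₂ _).submatrix _ _

theorem exists_isInfoSuperSet_RMgen_of_forall_eq_zero {d m : ℕ}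
    (h : ∀ e : {e : Fin m → Fin 2 // ∑ i, (e i : ℕ) ≤ d}, e.1 = 0) (S : ℕ) :
    ∃ T, IsInfoSuperSet (RMgen (ZMod 2) 2 d m) S T :=
  letI : Unique {e : Fin m → Fin 2 // ∑ i, (e i : ℕ) ≤ d} :=
    ⟨⟨⟨0, by simp⟩⟩, fun e => Subtype.ext (h e)⟩
  ⟨_, isInfoSuperSet_replicate (j := 0) (by simp [RMgen, h default]) S⟩

theorem exists_isInfoSuperSet_RMgen (S : ℕ) :
    ∀ d m, ∃ T, IsInfoSuperSet (RMgen (ZMod 2) 2 d m) S T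
  | _, 0 => exists_isInfoSuperSet_RMgen_of_forall_eq_zero (fun _ => Subsingleton.elim _ _) S
  | 0, _ + 1 => exists_isInfoSuperSet_RMgen_of_forall_eq_zero (fun e => funext fun i => Fin.ext
      (Finset.sum_eq_zero_iff.1 (Nat.le_zero.1 e.2) i (Finset.mem_univ _))) S
  | d + 1, n + 1 =>
    let ⟨_, h₁⟩ := exists_isInfoSuperSet_RMgen S (d + 1) n
    let ⟨_, h₂⟩ := exists_isInfoSuperSet_RMgen S d n
    ⟨_, h₁.RMgen_succ h₂⟩

/-- The `(u,u+v)` recursion bound for binary Reed–Muller codes: the minimum size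
`L(d,m,S)` of an `S`-information super-set for `RM(d,m)` satisfies
`L(d,m,S) ≤ L(d,m-1,S) + L(d-1,m-1,S)`. -/
theorem rm_recursive_bound (d m S : ℕ) (hd : 1 ≤ d) (hdm : d < m) :
    minSuperSize (RMgen (ZMod 2) 2 d m) S ≤
      minSuperSize (RMgen (ZMod 2) 2 d (m - 1)) S +
        minSuperSize (RMgen (ZMod 2) 2 (d - 1) (m - 1)) S := by
  obtain ⟨d, rfl⟩ : ∃ d', d = d' + 1 := ⟨d - 1, by omega⟩
  obtain ⟨n, rfl⟩ : ∃ n, m = n + 1 := ⟨m - 1, by omega⟩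
  simp only [Nat.add_one_sub_one]
  obtain ⟨T₁, hT₁, hcard₁⟩ :=
    exists_isInfoSuperSet_card_eq_minSuperSize (exists_isInfoSuperSet_RMgen S (d + 1) n)
  obtain ⟨T₂, hT₂, hcard₂⟩ :=
    exists_isInfoSuperSet_card_eq_minSuperSize (exists_isInfoSuperSet_RMgen S d n)
  calc _ ≤ _ := (hT₁.RMgen_succ hT₂).minSuperSize_le
    _ = _ := by simp [hcard₁, hcard₂]
end

section
/- Let F_q be a finite field whose characteristic is neither 2 nor 3. Then there exists a 2-information super-set for RM_q(1, q−2) of size q+1, and this is optimal: the minimum size of a 2-information super-set for RM_q(1,q−2) is exactly q+1. -/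
/-!
The moment curve `x ↦ (1, x, …, x^{q-2})` together with its point at infinity is an arc of
`q + 1` points in `F^{q-1}`: any `q - 1` of them are linearly independent (projective
Vandermonde determinant). The functional `v ↦ 2 v₀ + ∑ vⱼ` takes the values `3`, `1`, `2`
on the affine points `x = 0`, `x = 1`, `x ∉ {0, 1}` (a geometric sum over `F`) and `1`
at infinity, so in characteristic neither `2` nor `3` its kernel misses the arc. Rescaling
every point to value `1` there and dropping the first coordinate gives `q + 1` points
`z ∈ F^{q-2}` any `q - 1` of whose vectors `(1, z)` are independent, i.e. columns of
`RM_q(1, q-2)` forming a `2`-information super-set. No smaller one exists, since deleting two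
coordinates must still leave room for an information set of size `q - 1`.
-/

open Finset Function

theorem injective_of_forall_linearIndependent {R M ι : Type*} [Semiring R] [Nontrivial R]
    [AddCommMonoid M] [Module R M] [Fintype ι] {f : ι → M} {k : ℕ} (hk : 2 ≤ k)
    (hkι : k ≤ Fintype.card ι)
    (hli : ∀ s : Finset ι, s.card = k → LinearIndependent R fun i : s => f i) :
    Injective f := by
  classical
  intro a b hab
  by_contra hne
  obtain ⟨s, hsub, hs⟩ := Finset.exists_superset_card_eq (s := {a, b})
    (by rwa [Finset.card_pair hne]) hkι
  exact hne (congrArg Subtype.val ((hli s hs).injective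
    (a₁ := ⟨a, hsub (by simp)⟩) (a₂ := ⟨b, hsub (by simp)⟩) hab))

section RationalNormalCurve

variable {K : Type*} [Field K]

theorem Matrix.linearIndependent_rectVandermonde {ι : Type*} [Fintype ι] {n : ℕ}
    {v w : ι → K} (hn : Fintype.card ι = n)
    (hvw : Pairwise fun i j => v i * w j ≠ v j * w i) :
    LinearIndependent K (Matrix.rectVandermonde v w n) := by
  let e := Fintype.equivFinOfCardEq hn
  have hdet : (Matrix.projVandermonde (v ∘ e.symm) (w ∘ e.symm)).det ≠ 0 := by
    rw [Matrix.det_projVandermonde]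
    refine prod_ne_zero_iff.mpr fun i _ => prod_ne_zero_iff.mpr fun j hj => ?_
    exact sub_ne_zero.mpr (hvw (e.symm.injective.ne (mem_Ioi.mp hj).ne'))
  exact (linearIndependent_equiv' e.symm rfl).mp
    (Matrix.linearIndependent_rows_of_det_ne_zero hdet)

/-- Representatives of the points of the rational normal curve in `ℙⁿ(K)`; `none` is the point
at infinity. -/
def rationalNormalCurve (K : Type*) [Field K] (n : ℕ) : Option K → Fin (n + 1) → K
  | none => Pi.single (Fin.last n) 1
  | some x => fun j => x ^ (j : ℕ)

theorem rationalNormalCurve_eq_rectVandermonde (n : ℕ) :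
    rationalNormalCurve K n =
      Matrix.rectVandermonde (fun o => o.elim 1 id) (fun o => o.elim 0 1) (n + 1) := by
  funext o j
  cases o with
  | none =>
    simp [rationalNormalCurve, Matrix.rectVandermonde_apply, zero_pow_eq, Pi.single_apply,
      Fin.ext_iff]
    exact if_congr (by have := j.is_le; omega) rfl rfl
  | some x => simp [rationalNormalCurve, Matrix.rectVandermonde_apply]

theorem linearIndependent_rationalNormalCurve {n : ℕ} (s : Finset (Option K))
    (hs : s.card = n + 1) : LinearIndependent K fun o : s => rationalNormalCurve K n o := by
  rw [rationalNormalCurve_eq_rectVandermonde]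
  refine Matrix.linearIndependent_rectVandermonde (by simpa using hs) ?_
  rintro ⟨a, _⟩ ⟨b, _⟩ hab
  have hab : a ≠ b := fun h => hab (Subtype.ext h)
  cases a <;> cases b <;> simp_all

theorem LinearIndependent.cons_one_inv_smul_tail {ι : Type*} {n : ℕ}
    {v : ι → Fin (n + 1) → K} (hv : LinearIndependent K v)
    (φ : (Fin (n + 1) → K) →ₗ[K] K) (h0 : φ (Pi.single 0 1) ≠ 0)
    (hφ : ∀ i, φ (v i) ≠ 0) :
    LinearIndependent K fun i =>
      (Fin.cons 1 ((φ (v i))⁻¹ • Fin.tail (v i)) : Fin (n + 1) → K) := by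
  let Ψ : (Fin (n + 1) → K) →ₗ[K] Fin (n + 1) → K :=
    LinearMap.pi (Fin.cons φ fun i => LinearMap.proj i.succ)
  have hΨ : LinearMap.ker Ψ = ⊥ := by
    refine LinearMap.ker_eq_bot'.mpr fun u hu => ?_
    have htail (i : Fin n) : u i.succ = 0 := by simpa [Ψ] using congrFun hu i.succ
    have hu0 : u = u 0 • Pi.single 0 1 := by
      funext j
      cases j using Fin.cases <;> simp [htail]
    have hφu : φ u = 0 := by simpa [Ψ] using congrFun hu 0
    rw [hu0, map_smul, smul_eq_mul, mul_eq_zero, or_iff_left h0] at hφu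
    rw [hu0, hφu, zero_smul]
  have hscaled : (fun i => Units.mk0 _ (inv_ne_zero (hφ i))) • (Ψ ∘ v) =
      fun i => (Fin.cons 1 ((φ (v i))⁻¹ • Fin.tail (v i)) : Fin (n + 1) → K) := by
    funext i j
    cases j using Fin.cases <;> simp [Ψ, Fin.tail, inv_mul_cancel₀ (hφ i)]
  exact hscaled ▸ (hv.map' Ψ hΨ).units_smul _

end RationalNormalCurve

section FiniteField

variable {K : Type*} [Field K] [Fintype K]

theorem FiniteField.two_add_geom_sum_ne_zero (h2 : (2 : K) ≠ 0) (h3 : (3 : K) ≠ 0) (x : K) :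
    2 + ∑ i ∈ range (Fintype.card K - 1), x ^ i ≠ 0 := by
  have hq : 1 < Fintype.card K := Fintype.one_lt_card
  rcases eq_or_ne x 1 with rfl | h1
  · rw [one_geom_sum, Nat.cast_sub hq.le, FiniteField.cast_card_eq_zero]
    norm_num
  rcases eq_or_ne x 0 with rfl | h0
  · rw [zero_geom_sum, if_neg (by omega)]
    simpa [two_add_one_eq_three] using h3
  · rw [geom_sum_eq h1, FiniteField.pow_card_sub_one_eq_one x h0, sub_self, zero_div, add_zero]
    exact h2

theorem FiniteField.exists_linearMap_ne_zero_rationalNormalCurve (h2 : (2 : K) ≠ 0)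
    (h3 : (3 : K) ≠ 0) {n : ℕ} (hn : n + 2 = Fintype.card K) :
    ∃ φ : (Fin (n + 1) → K) →ₗ[K] K,
      φ (Pi.single 0 1) ≠ 0 ∧ ∀ o, φ (rationalNormalCurve K n o) ≠ 0 := by
  refine ⟨(2 : K) • LinearMap.proj 0 + ∑ j, LinearMap.proj j, ?_, ?_⟩
  · simpa [two_add_one_eq_three] using h3
  · rintro (_ | x)
    · rcases eq_or_ne (Fin.last n) 0 with h | h <;>
        simp [rationalNormalCurve, h, two_add_one_eq_three, h3]
    · simpa [rationalNormalCurve, Fin.sum_univ_eq_sum_range (fun i => x ^ i),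
        show n + 1 = Fintype.card K - 1 by omega] using two_add_geom_sum_ne_zero h2 h3 x

end FiniteField

namespace RMgen

variable {q m : ℕ}

/-- The exponent vectors of the monomials `1, x₀, …, x_{m-1}`, in this order. -/
def linearMonomial (hq : 1 < q) :
    Fin (m + 1) → {e : Fin m → Fin q // ∑ i, (e i : ℕ) ≤ 1} :=
  Fin.cons ⟨fun _ => ⟨0, by omega⟩, by simp⟩
    fun i => ⟨fun i' => ⟨if i' = i then 1 else 0, by split <;> omega⟩, by simp⟩

theorem linearMonomial_bijective (hq : 1 < q) : Bijective (linearMonomial (m := m) hq) := by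
  constructor
  · intro j j' h
    cases j using Fin.cases with
    | zero =>
      cases j' using Fin.cases with
      | zero => rfl
      | succ i' => simpa [linearMonomial] using congrArg (fun e => (e.1 i' : ℕ)) h
    | succ i =>
      cases j' using Fin.cases with
      | zero => simpa [linearMonomial] using congrArg (fun e => (e.1 i : ℕ)) h
      | succ i' => simpa [linearMonomial] using congrArg (fun e => (e.1 i : ℕ)) h
  · rintro ⟨e, he⟩
    by_cases h0 : ∀ i, (e i : ℕ) = 0
    · exact ⟨0, Subtype.ext <| funext fun i => Fin.ext (by simp [linearMonomial, h0])⟩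
    obtain ⟨i, hi⟩ := not_forall.mp h0
    have hsplit := add_sum_erase univ (fun i => (e i : ℕ)) (mem_univ i)
    have hrest := sum_eq_zero_iff.mp (show ∑ i' ∈ univ.erase i, (e i' : ℕ) = 0 by omega)
    refine ⟨i.succ, Subtype.ext <| funext fun i' => Fin.ext ?_⟩
    by_cases hi' : i' = i
    · subst hi'
      simp [linearMonomial]
      omega
    · simp [linearMonomial, hi', hrest i' (mem_erase.mpr ⟨hi', mem_univ _⟩)]

theorem card_linearExponents (hq : 1 < q) :
    Fintype.card {e : Fin m → Fin q // ∑ i, (e i : ℕ) ≤ 1} = m + 1 := by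
  simpa using (Fintype.card_of_bijective (linearMonomial_bijective (m := m) hq)).symm

theorem apply_linearMonomial {R : Type*} [CommRing R] (hq : 1 < q) (y : Fin m → R)
    (j : Fin (m + 1)) :
    RMgen R q 1 m (linearMonomial hq j) y = (Fin.cons 1 y : Fin (m + 1) → R) j := by
  cases j using Fin.cases with
  | zero => simp [RMgen, linearMonomial]
  | succ i =>
    simp only [RMgen, linearMonomial, Fin.cons_succ]
    rw [prod_eq_single i (fun b _ hb => by simp [hb]) (by simp)]
    simp

theorem linearIndependent_cols_of_cons_one {F : Type*} [Field F] (hq : 1 < q) {ι : Type*}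
    {p : ι → Fin m → F}
    (hp : LinearIndependent F fun i => (Fin.cons 1 (p i) : Fin (m + 1) → F)) :
    LinearIndependent F fun i r => RMgen F q 1 m r (p i) := by
  refine LinearIndependent.of_comp (LinearMap.funLeft F F (linearMonomial hq)) ?_
  convert hp using 1
  funext i j
  exact apply_linearMonomial hq (p i) j

end RMgen

section InfoSuperSet

variable {F : Type*} [Field F] {ρ ι : Type*} [Fintype ρ] {G : Matrix ρ ι F} {S : ℕ}

theorem IsInfoSuperSet.card_add_le {T : Multiset ι} (hT : IsInfoSuperSet G S T)
    (hρ : 0 < Fintype.card ρ) : Fintype.card ρ + S ≤ Multiset.card T := by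
  obtain ⟨W, hW⟩ : ∃ W, W ∈ Multiset.powersetCard (Multiset.card T - S) T :=
    Multiset.card_pos_iff_exists_mem.mp <| by
      rw [Multiset.card_powersetCard]
      exact Nat.choose_pos (Nat.sub_le _ _)
  rw [Multiset.mem_powersetCard] at hW
  obtain ⟨I, hIW, hI, -⟩ := hT W hW.1 hW.2
  have := Multiset.card_le_card hIW
  rw [← Finset.card_def, hI, hW.2] at this
  omega

theorem minSuperSize_eq_card {T : Multiset ι} (hT : IsInfoSuperSet G S T)
    (hmin : ∀ T', IsInfoSuperSet G S T' → Multiset.card T ≤ Multiset.card T') :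
    minSuperSize G S = Multiset.card T :=
  le_antisymm (Nat.sInf_le ⟨T, hT, rfl⟩)
    (le_csInf ⟨_, T, hT, rfl⟩ fun _ ⟨T', hT', hc⟩ => hc ▸ hmin T' hT')

theorem isInfoSuperSet_map_univ {κ : Type*} [Fintype κ] {p : κ → ι} (hp : Injective p)
    (hcard : Fintype.card ρ ≤ Fintype.card κ)
    (hli : ∀ s : Finset κ, s.card = Fintype.card ρ →
      LinearIndependent F fun i : s => fun r => G r (p i)) :
    IsInfoSuperSet G (Fintype.card κ - Fintype.card ρ) (univ.val.map p) := by
  intro W hW hWcard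
  let I : Finset ι := ⟨W, Multiset.nodup_of_le hW (univ.nodup.map hp)⟩
  obtain ⟨s, -, hs⟩ := Finset.subset_map_iff.mp
    (show I ⊆ univ.map ⟨p, hp⟩ from Multiset.subset_of_le hW)
  have hscard : s.card = Fintype.card ρ := by
    rw [← Finset.card_map ⟨p, hp⟩, ← hs, Finset.card_mk, hWcard]
    simp only [Multiset.card_map, Finset.card_val, Finset.card_univ]
    omega
  refine ⟨I, le_rfl, by rw [hs, Finset.card_map, hscard], ?_⟩
  have := LinearIndepOn.image_of_comp (s := (s : Set κ)) p (fun j r => G r j) (hli s hscard)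
  have hI : (I : Set ι) = p '' s := by rw [hs, Finset.coe_map]; rfl
  rwa [← hI] at this

end InfoSuperSet

theorem rm1_q_two_superset_optimal_general {F : Type*} [Field F] [Fintype F]
    (h2 : ringChar F ≠ 2) (h3 : ringChar F ≠ 3) :
    (∃ T : Multiset (Fin (Fintype.card F - 2) → F),
        Multiset.card T = Fintype.card F + 1 ∧
          IsInfoSuperSet (RMgen F (Fintype.card F) 1 (Fintype.card F - 2)) 2 T) ∧
      minSuperSize (RMgen F (Fintype.card F) 1 (Fintype.card F - 2)) 2
        = Fintype.card F + 1 := by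
  set q := Fintype.card F
  have hq : 2 < q := by
    have := FiniteField.odd_card_of_char_ne_two h2
    have : 1 < q := Fintype.one_lt_card
    omega
  have h3' : (3 : F) ≠ 0 := fun h =>
    h3 (CharP.ringChar_of_prime_eq_zero Nat.prime_three (by exact_mod_cast h))
  obtain ⟨φ, hφ0, hφ⟩ := FiniteField.exists_linearMap_ne_zero_rationalNormalCurve
    (Ring.two_ne_zero h2) h3' (n := q - 2) (by omega)
  let z (o : Option F) : Fin (q - 2) → F :=
    (φ (rationalNormalCurve F _ o))⁻¹ • Fin.tail (rationalNormalCurve F _ o)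
  have hli (s : Finset (Option F)) (hs : s.card = q - 1) :
      LinearIndependent F fun o : s => (Fin.cons 1 (z o) : Fin (q - 2 + 1) → F) :=
    (linearIndependent_rationalNormalCurve s (by omega)).cons_one_inv_smul_tail φ hφ0
      fun o => hφ o
  have hcard := RMgen.card_linearExponents (m := q - 2) (by omega : 1 < q)
  have hz : Injective z :=
    (injective_of_forall_linearIndependent (k := q - 1) (by omega) (by simp; omega) hli).of_comp
  have hT : IsInfoSuperSet (RMgen F q 1 (q - 2)) 2 (univ.val.map z) := by
    have := isInfoSuperSet_map_univ hz (by rw [hcard, Fintype.card_option]; omega)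
      fun s hs => RMgen.linearIndependent_cols_of_cons_one (by omega) (hli s (by omega))
    rwa [Fintype.card_option, hcard, show q + 1 - (q - 2 + 1) = 2 by omega] at this
  have hTcard : Multiset.card (univ.val.map z) = q + 1 := by simp [q]
  refine ⟨⟨_, hTcard, hT⟩, ?_⟩
  rw [← hTcard]
  refine minSuperSize_eq_card hT fun T' hT' => ?_
  have := hT'.card_add_le (by omega)
  omega

/-- For a finite field `F` with `q` elements and characteristic neither 2 nor 3, there
exists a `2`-information super-set for `RM_q(1, q-2)` of size `q+1`, and this is optimal:
the minimum size of a `2`-information super-set for `RM_q(1, q-2)` is exactly `q+1`. -/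
theorem rm1_q_two_superset_optimal {F : Type*} [Field F] [Fintype F] [DecidableEq F]
    (h2 : ringChar F ≠ 2) (h3 : ringChar F ≠ 3) :
    (∃ T : Multiset (Fin (Fintype.card F - 2) → F),
        Multiset.card T = Fintype.card F + 1 ∧
          IsInfoSuperSet (RMgen F (Fintype.card F) 1 (Fintype.card F - 2)) 2 T) ∧
      minSuperSize (RMgen F (Fintype.card F) 1 (Fintype.card F - 2)) 2
        = Fintype.card F + 1 :=
  rm1_q_two_superset_optimal_general h2 h3
end
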